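/- arXiv:1301.1784 — 3 statements merged into one kernel-verified Lean document; each statement's English description precedes it below -/
import Mathlib

section
/- Let Θ be a compact convex subset of ℝ^d with positive Lebesgue volume. For each positive integer l, let A_l be a real diagonal matrix indexed by lΘ ∩ ℤ^d with diagonal entries a^{(l)}_{e,e} > 0 satisfying a^{(l)}_{e,e} ≤ 1 for all e ∈ lΘ ∩ ℤ^d, and let K_l = { (x_e) ∈ ℝ^{lΘ∩ℤ^d} : Σ_e a^{(l)}_{e,e} x_e² ≤ 1 }. Suppose there exist constants D₁, D₂ > 0 and a continuous function φ : Θ → ℝ such that |log(1/a^{(l)}_{e,e}) − l·φ(e/l)| ≤ D₁ log(l) + D₂ for every positive integer l and every e ∈ lΘ ∩ ℤ^d. Then the limit lim_{l→∞} log Card(K_l ∩ ℤ^{lΘ∩ℤ^d}) / l^{d+1} exists and equals (1/2) ∫_Θ φ(x) dx. -/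
/-!
Let `n = Card (lΘ ∩ ℤᵈ)`. The integer points of the ellipsoid `∑ₑ aₑ xₑ² ≤ 1` in `ℤⁿ` are
squeezed between two boxes: the box of half-sides `(n aₑ)^(-1/2)` lies inside the ellipsoid, and
the box of half-sides `aₑ^(-1/2)` contains it. Counting integer points of boxes gives
`log Card = ½ ∑ₑ log (1 / aₑ) + O(n log n)`, and the hypothesis on the `aₑ` turns
`½ ∑ₑ log (1 / aₑ)` into `(l / 2) ∑ₑ φ (e / l)` up to `O(n log l)`. Since `n = O(lᵈ)`, after
dividing by `l^(d+1)` only the Riemann sum `l⁻ᵈ ∑ₑ φ (e / l)` survives, and it tends to `∫_Θ φ`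
because the frontier of a convex body is Lebesgue-null.
-/

open MeasureTheory Filter Pointwise Topology

theorem abs_le_sqrt_inv_iff {c x : ℝ} (hc : 0 < c) : |x| ≤ √c⁻¹ ↔ c * x ^ 2 ≤ 1 := by
  rw [← Real.sqrt_sq_eq_abs, Real.sqrt_le_sqrt_iff (inv_nonneg.mpr hc.le), ← mul_one c⁻¹,
    le_inv_mul_iff₀ hc]

theorem le_two_mul_floor_add_one {t : ℝ} (ht : 0 ≤ t) : t ≤ 2 * ⌊t⌋ + 1 := by
  have : (0 : ℝ) ≤ ⌊t⌋ := Int.cast_nonneg (Int.floor_nonneg.mpr ht)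
  rcases lt_or_ge t 1 with h | h
  · linarith
  · linarith [Int.sub_one_lt_floor t]

theorem two_mul_floor_add_one_le {t : ℝ} (ht : 1 ≤ t) : 2 * ⌊t⌋ + 1 ≤ 3 * t := by
  linarith [Int.floor_le t]

theorem natCard_subtype_intCast {ι : Type*} (P : (ι → ℝ) → Prop) :
    Nat.card {x : ι → ℝ // P x ∧ ∀ i, ∃ m : ℤ, x i = m} =
      Nat.card {y : ι → ℤ // P fun i => y i} := by
  refine (Nat.card_congr (Equiv.ofBijective (fun y => ⟨fun i => y.1 i, y.2, fun i => ⟨_, rfl⟩⟩)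
    ⟨fun y y' h => Subtype.ext (funext fun i => Int.cast_injective
      (congrFun (congrArg Subtype.val h) i)), ?_⟩)).symm
  rintro ⟨x, hP, hx⟩
  obtain ⟨m, hm⟩ := Classical.skolem.mp hx
  have hxm : (fun i => (m i : ℝ)) = x := (funext hm).symm
  exact ⟨⟨m, hxm ▸ hP⟩, Subtype.ext hxm⟩

section EllipsoidLatticePoints

variable {ι : Type*} [Fintype ι]

def ellipsoidLatticePoints (a : ι → ℝ) : Set (ι → ℤ) :=
  {y | ∑ i, a i * (y i : ℝ) ^ 2 ≤ 1}

theorem setOf_forall_abs_le_eq_piFinset [DecidableEq ι] (t : ι → ℝ) :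
    {y : ι → ℤ | ∀ i, |(y i : ℝ)| ≤ t i} =
      ↑(Fintype.piFinset fun i => Finset.Icc (-⌊t i⌋) ⌊t i⌋) := by
  ext y
  simp only [Finset.mem_coe, Fintype.mem_piFinset]
  exact forall_congr' fun i => by rw [Finset.mem_Icc, ← abs_le, Int.le_floor, Int.cast_abs]

theorem finite_setOf_forall_abs_le (t : ι → ℝ) :
    {y : ι → ℤ | ∀ i, |(y i : ℝ)| ≤ t i}.Finite := by
  classical
  rw [setOf_forall_abs_le_eq_piFinset]
  exact Finset.finite_toSet _

theorem natCard_setOf_forall_abs_le {t : ι → ℝ} (ht : 0 ≤ t) :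
    (Nat.card {y : ι → ℤ | ∀ i, |(y i : ℝ)| ≤ t i} : ℝ) = ∏ i, (2 * ⌊t i⌋ + 1 : ℝ) := by
  classical
  rw [setOf_forall_abs_le_eq_piFinset, Nat.card_coe_set_eq, Set.ncard_coe_finset,
    Fintype.card_piFinset, Nat.cast_prod]
  refine Finset.prod_congr rfl fun i _ => ?_
  have := Int.floor_nonneg.mpr (ht i)
  rw [Int.card_Icc, ← Int.cast_natCast, Int.toNat_of_nonneg (by omega)]
  push_cast
  ring

theorem ellipsoidLatticePoints_subset {a : ι → ℝ} (ha : ∀ i, 0 < a i) :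
    ellipsoidLatticePoints a ⊆ {y | ∀ i, |(y i : ℝ)| ≤ √(a i)⁻¹} :=
  fun y hy i => (abs_le_sqrt_inv_iff (ha i)).mpr <|
    (Finset.single_le_sum (f := fun j => a j * (y j : ℝ) ^ 2)
      (fun j _ => mul_nonneg (ha j).le (sq_nonneg _)) (Finset.mem_univ i)).trans hy

theorem subset_ellipsoidLatticePoints {a : ι → ℝ} (ha : ∀ i, 0 < a i) :
    {y : ι → ℤ | ∀ i, |(y i : ℝ)| ≤ √(Fintype.card ι * a i)⁻¹} ⊆ ellipsoidLatticePoints a := by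
  intro y hy
  have hterm (i : ι) : a i * (y i : ℝ) ^ 2 ≤ (Fintype.card ι : ℝ)⁻¹ := by
    have hn : (0 : ℝ) < Fintype.card ι := Nat.cast_pos.mpr (Fintype.card_pos_iff.mpr ⟨i⟩)
    rw [← mul_one (Fintype.card ι : ℝ)⁻¹, le_inv_mul_iff₀ hn, ← mul_assoc]
    exact (abs_le_sqrt_inv_iff (mul_pos hn (ha i))).mp (hy i)
  calc ∑ i, a i * (y i : ℝ) ^ 2 ≤ ∑ _i : ι, (Fintype.card ι : ℝ)⁻¹ :=
        Finset.sum_le_sum fun i _ => hterm i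
    _ ≤ 1 := by simpa using mul_inv_le_one

theorem finite_ellipsoidLatticePoints {a : ι → ℝ} (ha : ∀ i, 0 < a i) :
    (ellipsoidLatticePoints a).Finite :=
  (finite_setOf_forall_abs_le _).subset (ellipsoidLatticePoints_subset ha)

theorem zero_mem_ellipsoidLatticePoints (a : ι → ℝ) : 0 ∈ ellipsoidLatticePoints a := by
  simp [ellipsoidLatticePoints]

theorem prod_sqrt_inv_le_natCard_ellipsoidLatticePoints {a : ι → ℝ} (ha : ∀ i, 0 < a i) :
    ∏ i, √(Fintype.card ι * a i)⁻¹ ≤ Nat.card (ellipsoidLatticePoints a) := calc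
  ∏ i, √(Fintype.card ι * a i)⁻¹ ≤ ∏ i, (2 * ⌊√(Fintype.card ι * a i)⁻¹⌋ + 1 : ℝ) :=
    Finset.prod_le_prod (fun _ _ => Real.sqrt_nonneg _)
      fun _ _ => le_two_mul_floor_add_one (Real.sqrt_nonneg _)
  _ = Nat.card {y : ι → ℤ | ∀ i, |(y i : ℝ)| ≤ √(Fintype.card ι * a i)⁻¹} :=
    (natCard_setOf_forall_abs_le fun _ => Real.sqrt_nonneg _).symm
  _ ≤ Nat.card (ellipsoidLatticePoints a) := Nat.cast_le.mpr <|
    Nat.card_mono (finite_ellipsoidLatticePoints ha) (subset_ellipsoidLatticePoints ha)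

theorem natCard_ellipsoidLatticePoints_le_prod {a : ι → ℝ} (ha : ∀ i, 0 < a i)
    (ha₁ : ∀ i, a i ≤ 1) :
    Nat.card (ellipsoidLatticePoints a) ≤ ∏ i, 3 * √(a i)⁻¹ := calc
  (Nat.card (ellipsoidLatticePoints a) : ℝ) ≤
      Nat.card {y : ι → ℤ | ∀ i, |(y i : ℝ)| ≤ √(a i)⁻¹} :=
    Nat.cast_le.mpr <|
      Nat.card_mono (finite_setOf_forall_abs_le _) (ellipsoidLatticePoints_subset ha)
  _ = ∏ i, (2 * ⌊√(a i)⁻¹⌋ + 1 : ℝ) := natCard_setOf_forall_abs_le fun _ => Real.sqrt_nonneg _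
  _ ≤ ∏ i, 3 * √(a i)⁻¹ :=
    Finset.prod_le_prod (fun i _ => by positivity) fun i _ =>
      two_mul_floor_add_one_le (Real.one_le_sqrt.mpr (one_le_inv_iff₀.mpr ⟨ha i, ha₁ i⟩))

theorem le_log_natCard_ellipsoidLatticePoints {a : ι → ℝ} (ha : ∀ i, 0 < a i) :
    (1 / 2) * ∑ i, Real.log (a i)⁻¹ - Fintype.card ι / 2 * Real.log (Fintype.card ι) ≤
      Real.log (Nat.card (ellipsoidLatticePoints a)) := by
  set n : ℝ := (Fintype.card ι : ℝ)
  have hpos (i : ι) : 0 < √(n * a i)⁻¹ :=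
    Real.sqrt_pos.mpr (inv_pos.mpr (mul_pos (Nat.cast_pos.mpr (Fintype.card_pos_iff.mpr ⟨i⟩))
      (ha i)))
  calc (1 / 2) * ∑ i, Real.log (a i)⁻¹ - n / 2 * Real.log n
      = ∑ i, ((1 / 2) * Real.log (a i)⁻¹ - (1 / 2) * Real.log n) := by
        rw [Finset.sum_sub_distrib, ← Finset.mul_sum, Finset.sum_const, Finset.card_univ,
          nsmul_eq_mul]
        ring
    _ = Real.log (∏ i, √(n * a i)⁻¹) := by
        rw [Real.log_prod fun i _ => (hpos i).ne']
        refine Finset.sum_congr rfl fun i _ => ?_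
        have hn : 0 < n := Nat.cast_pos.mpr (Fintype.card_pos_iff.mpr ⟨i⟩)
        rw [Real.log_sqrt (inv_nonneg.mpr (mul_pos hn (ha i)).le), Real.log_inv (n * a i),
          Real.log_mul hn.ne' (ha i).ne', Real.log_inv]
        ring
    _ ≤ _ := Real.log_le_log (Finset.prod_pos fun i _ => hpos i)
        (prod_sqrt_inv_le_natCard_ellipsoidLatticePoints ha)

theorem log_natCard_ellipsoidLatticePoints_le {a : ι → ℝ} (ha : ∀ i, 0 < a i)
    (ha₁ : ∀ i, a i ≤ 1) :
    Real.log (Nat.card (ellipsoidLatticePoints a)) ≤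
      (1 / 2) * ∑ i, Real.log (a i)⁻¹ + Fintype.card ι * Real.log 3 := by
  have hpos (i : ι) : 0 < √(a i)⁻¹ := Real.sqrt_pos.mpr (inv_pos.mpr (ha i))
  have hcard_pos : (0 : ℝ) < Nat.card (ellipsoidLatticePoints a) := Nat.cast_pos.mpr <|
    Nat.card_pos_iff.mpr ⟨⟨⟨0, zero_mem_ellipsoidLatticePoints a⟩⟩,
      (finite_ellipsoidLatticePoints ha).to_subtype⟩
  calc Real.log (Nat.card (ellipsoidLatticePoints a)) ≤ Real.log (∏ i, 3 * √(a i)⁻¹) :=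
        Real.log_le_log hcard_pos (natCard_ellipsoidLatticePoints_le_prod ha ha₁)
    _ = ∑ i, ((1 / 2) * Real.log (a i)⁻¹ + Real.log 3) := by
        rw [Real.log_prod fun i _ => (mul_pos three_pos (hpos i)).ne']
        refine Finset.sum_congr rfl fun i _ => ?_
        rw [Real.log_mul three_ne_zero (hpos i).ne', Real.log_sqrt (inv_nonneg.mpr (ha i).le)]
        ring
    _ = _ := by
        rw [Finset.sum_add_distrib, ← Finset.mul_sum, Finset.sum_const, Finset.card_univ,
          nsmul_eq_mul]

theorem abs_log_natCard_ellipsoidLatticePoints_sub_le {a : ι → ℝ} (ha : ∀ i, 0 < a i)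
    (ha₁ : ∀ i, a i ≤ 1) :
    |Real.log (Nat.card (ellipsoidLatticePoints a)) - (1 / 2) * ∑ i, Real.log (a i)⁻¹| ≤
      Fintype.card ι * Real.log 3 + Fintype.card ι / 2 * Real.log (Fintype.card ι) := by
  have h₁ := le_log_natCard_ellipsoidLatticePoints ha
  have h₂ := log_natCard_ellipsoidLatticePoints_le ha ha₁
  have : (0 : ℝ) ≤ Fintype.card ι / 2 * Real.log (Fintype.card ι) := by positivity
  have : (0 : ℝ) ≤ Fintype.card ι * Real.log 3 := by positivity
  rw [abs_le]
  constructor <;> linarith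

theorem abs_log_natCard_ellipsoidLatticePoints_sub_sum_le {a : ι → ℝ} (ha : ∀ i, 0 < a i)
    (ha₁ : ∀ i, a i ≤ 1) {ψ : ι → ℝ} {δ : ℝ} (hψ : ∀ i, |Real.log (a i)⁻¹ - ψ i| ≤ δ) :
    |Real.log (Nat.card (ellipsoidLatticePoints a)) - (1 / 2) * ∑ i, ψ i| ≤
      Fintype.card ι * (Real.log 3 + (1 / 2) * Real.log (Fintype.card ι) + (1 / 2) * δ) := by
  have hsum : |∑ i, Real.log (a i)⁻¹ - ∑ i, ψ i| ≤ Fintype.card ι * δ := calc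
    _ = |∑ i, (Real.log (a i)⁻¹ - ψ i)| := by rw [Finset.sum_sub_distrib]
    _ ≤ ∑ i, |Real.log (a i)⁻¹ - ψ i| := Finset.abs_sum_le_sum_abs _ _
    _ ≤ ∑ _i : ι, δ := Finset.sum_le_sum fun i _ => hψ i
    _ = Fintype.card ι * δ := by simp
  have hcount := abs_log_natCard_ellipsoidLatticePoints_sub_le ha ha₁
  rw [abs_le] at hsum hcount ⊢
  constructor <;> linarith [hsum.1, hsum.2, hcount.1, hcount.2]

end EllipsoidLatticePoints

section LatticePoints

variable {ι : Type*}

def latticePoints (s : Set (ι → ℝ)) (n : ℕ) : Set (ι → ℤ) :=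
  {e | (fun i => (e i : ℝ)) ∈ (n : ℝ) • s}

theorem mem_latticePoints_iff {s : Set (ι → ℝ)} {n : ℕ} [NeZero n] {e : ι → ℤ} :
    e ∈ latticePoints s n ↔ (fun i => (e i : ℝ) / n) ∈ s := by
  rw [latticePoints, Set.mem_ofPred_eq, Set.mem_smul_set_iff_inv_smul_mem₀ (NeZero.ne _)]
  simp only [div_eq_inv_mul]
  rfl

/-- `e ↦ e / n` identifies the lattice points of `n • s` with `s ∩ n⁻¹ ℤ^ι`, the form in which
`tendsto_tsum_div_pow_atTop_integral` states the convergence of Riemann sums. -/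
noncomputable def latticePointsEquiv [Finite ι] (s : Set (ι → ℝ)) (n : ℕ) [NeZero n] :
    latticePoints s n ≃
      ↥(s ∩ (n : ℝ)⁻¹ • (Submodule.span ℤ (Set.range (Pi.basisFun ℝ ι)) : Set (ι → ℝ))) :=
  Equiv.ofBijective
    (fun e => ⟨fun i => (e.1 i : ℝ) / n, mem_latticePoints_iff.mp e.2,
      BoxIntegral.unitPartition.mem_smul_span_iff.mpr fun i =>
        ⟨e.1 i, by simp [mul_div_cancel₀ _ (NeZero.ne (n : ℝ))]⟩⟩)
    ⟨fun e e' h => Subtype.ext <| funext fun i => by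
        simpa [div_left_inj' (NeZero.ne (n : ℝ))] using congrFun (congrArg Subtype.val h) i,
      fun ⟨x, hxs, hxL⟩ => by
        choose e he using BoxIntegral.unitPartition.mem_smul_span_iff.mp hxL
        have hx : (fun i => (e i : ℝ) / n) = x := funext fun i => by
          rw [← eq_intCast (algebraMap ℤ ℝ), he i, mul_div_cancel_left₀ _ (NeZero.ne (n : ℝ))]
        exact ⟨⟨e, mem_latticePoints_iff.mpr (hx ▸ hxs)⟩, Subtype.ext hx⟩⟩

variable [Fintype ι]

theorem finite_latticePoints {s : Set (ι → ℝ)} (hs : Bornology.IsBounded s) (n : ℕ)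
    [NeZero n] : (latticePoints s n).Finite := by
  have : Finite ↥(s ∩ (n : ℝ)⁻¹ •
      (Submodule.span ℤ (Set.range (Pi.basisFun ℝ ι)) : Set (ι → ℝ))) := by
    rw [Set.finite_coe_iff, ← Submodule.coe_pointwise_smul,
      ZSpan.smul _ (inv_ne_zero (NeZero.ne _))]
    exact ZSpan.setFinite_inter _ hs
  exact Set.finite_coe_iff.mp (Finite.of_equiv _ (latticePointsEquiv s n).symm)

theorem tendsto_natCard_latticePoints_div_pow {s : Set (ι → ℝ)}
    (hs₁ : Bornology.IsBounded s) (hs₂ : MeasurableSet s) (hs₃ : volume (frontier s) = 0) :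
    Tendsto (fun n : ℕ => (Nat.card (latticePoints s n) : ℝ) / (n : ℝ) ^ Fintype.card ι)
      atTop (𝓝 (volume.real s)) := by
  refine (tendsto_card_div_pow_atTop_volume s hs₁ hs₂ hs₃).congr' ?_
  filter_upwards [eventually_ne_atTop 0] with n hn
  have : NeZero n := ⟨hn⟩
  rw [Nat.card_congr (latticePointsEquiv s n)]

theorem tendsto_finsum_latticePoints_div_pow_of_continuous {s : Set (ι → ℝ)}
    (hs₁ : Bornology.IsBounded s) (hs₂ : MeasurableSet s) (hs₃ : volume (frontier s) = 0)
    {F : (ι → ℝ) → ℝ} (hF : Continuous F) :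
    Tendsto (fun n : ℕ => (∑ᶠ e : latticePoints s n, F (fun i => (e.1 i : ℝ) / n)) /
      (n : ℝ) ^ Fintype.card ι) atTop (𝓝 (∫ x in s, F x)) := by
  refine (tendsto_tsum_div_pow_atTop_integral s F hF hs₁ hs₂ hs₃).congr' ?_
  filter_upwards [eventually_ne_atTop 0] with n hn
  have : NeZero n := ⟨hn⟩
  have : Finite (latticePoints s n) := finite_latticePoints hs₁ n
  rw [← (latticePointsEquiv s n).tsum_eq, tsum_eq_finsum (Set.toFinite _)]
  rfl

theorem tendsto_finsum_latticePoints_div_pow {s : Set (ι → ℝ)} (hs₁ : IsCompact s)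
    (hs₂ : volume (frontier s) = 0) {F : (ι → ℝ) → ℝ} (hF : ContinuousOn F s) :
    Tendsto (fun n : ℕ => (∑ᶠ e : latticePoints s n, F (fun i => (e.1 i : ℝ) / n)) /
      (n : ℝ) ^ Fintype.card ι) atTop (𝓝 (∫ x in s, F x)) := by
  obtain ⟨G, hG⟩ := ContinuousMap.exists_restrict_eq hs₁.isClosed ⟨s.domRestrict F, hF.domRestrict⟩
  have hGF : Set.EqOn G F s := fun x hx => congr($hG ⟨x, hx⟩)
  rw [← setIntegral_congr_fun hs₁.isClosed.measurableSet hGF]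
  refine (tendsto_finsum_latticePoints_div_pow_of_continuous hs₁.isBounded
    hs₁.isClosed.measurableSet hs₂ G.continuous).congr' ?_
  filter_upwards [eventually_ne_atTop 0] with n hn
  have : NeZero n := ⟨hn⟩
  congr 1
  exact finsum_congr fun e => hGF (mem_latticePoints_iff.mp e.2)

end LatticePoints

theorem tendsto_log_natCast_div_natCast :
    Tendsto (fun l : ℕ => Real.log l / l) atTop (𝓝 0) :=
  Real.isLittleO_log_id_atTop.tendsto_div_nhds_zero.comp tendsto_natCast_atTop_atTop

theorem tendsto_log_natCast_div_of_tendsto_div_pow {n : ℕ → ℕ} {d : ℕ} {v : ℝ}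
    (hn : Tendsto (fun l : ℕ => (n l : ℝ) / l ^ d) atTop (𝓝 v)) :
    Tendsto (fun l : ℕ => Real.log (n l) / l) atTop (𝓝 0) := by
  have hv : 0 ≤ v := ge_of_tendsto' hn fun l => by positivity
  have hupper : Tendsto (fun l : ℕ => (Real.log (v + 1) + d * Real.log l) / l) atTop (𝓝 0) := by
    simpa [add_div, mul_div_assoc] using (tendsto_const_nhds.div_atTop
      tendsto_natCast_atTop_atTop).add (tendsto_log_natCast_div_natCast.const_mul (d : ℝ))
  refine squeeze_zero' (Eventually.of_forall fun l => by positivity) ?_ hupper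
  filter_upwards [hn.eventually (gt_mem_nhds (lt_add_one v)), eventually_ne_atTop 0] with l hl hl0
  have hl₁ : (1 : ℝ) ≤ l := Nat.one_le_cast.mpr (Nat.one_le_iff_ne_zero.mpr hl0)
  rw [div_lt_iff₀ (by positivity)] at hl
  gcongr
  rcases (n l).eq_zero_or_pos with h | h
  · rw [h, Nat.cast_zero, Real.log_zero]
    have := Real.log_nonneg hl₁
    have := Real.log_nonneg (by linarith : (1 : ℝ) ≤ v + 1)
    positivity
  · rw [← Real.log_pow, ← Real.log_mul (by positivity) (by positivity)]
    exact Real.log_le_log (by exact_mod_cast h) hl.le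

theorem tendsto_natCast_mul_log_div_pow_succ {n : ℕ → ℕ} {d : ℕ} {v : ℝ}
    (hn : Tendsto (fun l : ℕ => (n l : ℝ) / l ^ d) atTop (𝓝 v)) (α β γ : ℝ) :
    Tendsto (fun l : ℕ => n l * (α + β * Real.log (n l) + γ * Real.log l) / l ^ (d + 1))
      atTop (𝓝 0) := by
  have hsmall : Tendsto (fun l : ℕ => (α + β * Real.log (n l) + γ * Real.log l) / l)
      atTop (𝓝 0) := by
    simpa [add_div, mul_div_assoc] using
      ((tendsto_const_nhds.div_atTop tendsto_natCast_atTop_atTop).add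
        ((tendsto_log_natCast_div_of_tendsto_div_pow hn).const_mul β)).add
        (tendsto_log_natCast_div_natCast.const_mul γ)
  have := hn.mul hsmall
  rw [mul_zero] at this
  refine this.congr' ?_
  filter_upwards [eventually_ne_atTop 0] with l hl
  field_simp
  ring

theorem tendsto_log_card_diagonal_ellipsoid_lattice_points_general
    {d : ℕ} (Θ : Set (Fin d → ℝ))
    (hconv : Convex ℝ Θ) (hcomp : IsCompact Θ)
    (S : ℕ → Set (Fin d → ℤ))
    (hS : ∀ l : ℕ, S l = {e : Fin d → ℤ | (fun i => (e i : ℝ)) ∈ (l : ℝ) • Θ})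
    (a : ∀ l : ℕ, S l → ℝ)
    (hpos : ∀ l : ℕ, 1 ≤ l → ∀ e : S l, 0 < a l e)
    (hle : ∀ l : ℕ, 1 ≤ l → ∀ e : S l, a l e ≤ 1)
    (φ : (Fin d → ℝ) → ℝ) (hφ : ContinuousOn φ Θ)
    (D₁ D₂ : ℝ)
    (hbound : ∀ l : ℕ, 1 ≤ l → ∀ e : S l,
      |Real.log (1 / a l e) - l * φ (fun i => (e.1 i : ℝ) / l)| ≤
        D₁ * Real.log l + D₂)
    (K : ∀ l : ℕ, Set (S l → ℝ))
    (hK : ∀ l : ℕ, K l = {x : S l → ℝ | ∑ᶠ e : S l, a l e * (x e) ^ 2 ≤ 1}) :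
    Tendsto (fun l : ℕ =>
        Real.log (Nat.card {x : S l → ℝ // x ∈ K l ∧ ∀ e : S l, ∃ n : ℤ, x e = (n : ℝ)}) /
          (l : ℝ) ^ (d + 1)) atTop
      (nhds ((1 / 2) * ∫ x in Θ, φ x)) := by
  obtain rfl : S = latticePoints Θ := funext hS
  obtain rfl : K = _ := funext hK
  have hfrontier := hconv.addHaar_frontier volume
  have hriemann := (tendsto_finsum_latticePoints_div_pow hcomp hfrontier hφ).const_mul (1 / 2)
  have hcard := tendsto_natCard_latticePoints_div_pow hcomp.isBounded
    hcomp.isClosed.measurableSet hfrontier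
  simp only [Fintype.card_fin] at hriemann hcard
  have herror := tendsto_natCast_mul_log_div_pow_succ hcard (Real.log 3 + D₂ / 2) (1 / 2) (D₁ / 2)
  refine hriemann.congr_dist (squeeze_zero' (Eventually.of_forall fun _ => dist_nonneg) ?_ herror)
  filter_upwards [eventually_ge_atTop 1] with l hl
  have : NeZero l := ⟨Nat.one_le_iff_ne_zero.mp hl⟩
  have : Fintype (latticePoints Θ l) := (finite_latticePoints hcomp.isBounded l).fintype
  have hest := abs_log_natCard_ellipsoidLatticePoints_sub_sum_le (hpos l hl) (hle l hl)
    (ψ := fun e => l * φ (fun i => (e.1 i : ℝ) / l)) (by simpa using hbound l hl)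
  have hdist (X Y : ℝ) : dist (1 / 2 * (X / l ^ d)) (Y / l ^ (d + 1)) =
      |Y - 1 / 2 * (l * X)| / l ^ (d + 1) := by
    have hl₀ : (0 : ℝ) < l ^ (d + 1) := by positivity
    rw [Real.dist_eq, abs_sub_comm, ← abs_of_pos hl₀, ← abs_div, abs_of_pos hl₀]
    congr 1
    field_simp
    ring
  rw [natCard_subtype_intCast (fun x => ∑ᶠ e, a l e * x e ^ 2 ≤ 1), hdist]
  simp only [finsum_eq_sum_of_fintype, ← Nat.card_eq_fintype_card, Finset.mul_sum] at hest ⊢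
  gcongr
  exact hest.trans_eq (by ring)

/-- Moriwaki's counting lemma (equality, diagonal case): if `Θ ⊆ ℝ^d` is compact convex
with positive volume, `A_l` is a diagonal matrix indexed by the lattice points of `lΘ`
with positive diagonal entries `a_{e,e} ≤ 1` satisfying
`|log(1/a_{e,e}) - l φ(e/l)| ≤ D₁ log l + D₂` for a continuous `φ : Θ → ℝ`, and `K_l`
is the associated unit ellipsoid, then
`lim_{l} log Card(K_l ∩ ℤ^{lΘ∩ℤ^d}) / l^{d+1} = (1/2) ∫_Θ φ`. -/
theorem tendsto_log_card_diagonal_ellipsoid_lattice_points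
    {d : ℕ} (Θ : Set (Fin d → ℝ))
    (hconv : Convex ℝ Θ) (hcomp : IsCompact Θ) (hvol : 0 < volume Θ)
    (S : ℕ → Set (Fin d → ℤ))
    (hS : ∀ l : ℕ, S l = {e : Fin d → ℤ | (fun i => (e i : ℝ)) ∈ (l : ℝ) • Θ})
    (a : ∀ l : ℕ, S l → ℝ)
    (hpos : ∀ l : ℕ, 1 ≤ l → ∀ e : S l, 0 < a l e)
    (hle : ∀ l : ℕ, 1 ≤ l → ∀ e : S l, a l e ≤ 1)
    (φ : (Fin d → ℝ) → ℝ) (hφ : ContinuousOn φ Θ)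
    (D₁ D₂ : ℝ) (hD₁ : 0 < D₁) (hD₂ : 0 < D₂)
    (hbound : ∀ l : ℕ, 1 ≤ l → ∀ e : S l,
      |Real.log (1 / a l e) - l * φ (fun i => (e.1 i : ℝ) / l)| ≤
        D₁ * Real.log l + D₂)
    (K : ∀ l : ℕ, Set (S l → ℝ))
    (hK : ∀ l : ℕ, K l = {x : S l → ℝ | ∑ᶠ e : S l, a l e * (x e) ^ 2 ≤ 1}) :
    Tendsto (fun l : ℕ =>
        Real.log (Nat.card {x : S l → ℝ // x ∈ K l ∧ ∀ e : S l, ∃ n : ℤ, x e = (n : ℝ)}) /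
          (l : ℝ) ^ (d + 1)) atTop
      (nhds ((1 / 2) * ∫ x in Θ, φ x)) :=
  tendsto_log_card_diagonal_ellipsoid_lattice_points_general Θ hconv hcomp S hS a hpos hle φ hφ D₁
    D₂ hbound K hK
end

section
/- Let d ≥ 1 and l ≥ 1 be integers, and let P ∈ ℤ[X₀,…,X_d] be a nonzero homogeneous polynomial of degree l with integer coefficients such that |P(x₀,…,x_d)| ≤ max(|x₀|,…,|x_d|)^l for all (x₀,…,x_d) ∈ ℂ^{d+1}. Then there exists a multi-index ν ∈ ℕ^{d+1} with |ν| = l such that P = X^ν or P = −X^ν. -/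
/-!
Sampling `P` on the grid `μ_N^{d+1}` of `N`-th roots of unity with `N > l`, the monomials of
degree `l` restrict to pairwise orthogonal characters, so the mean of `|P|²` over the grid is the
sum of the squares of the coefficients (a discrete Parseval identity). The bound makes that mean at
most `1`, and a nonzero integer polynomial whose squared coefficients sum to at most `1` is `±` a
monomial.
-/

open Complex ComplexConjugate MvPolynomial Finset

namespace IsPrimitiveRoot

variable {ζ : ℂ} {N : ℕ}

theorem sum_pow_mul_conj_pow (hζ : IsPrimitiveRoot ζ N) {a b : ℕ} (ha : a < N) (hb : b < N) :
    ∑ k ∈ range N, (ζ ^ k) ^ a * conj ((ζ ^ k) ^ b) = if a = b then (N : ℂ) else 0 := by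
  have hnorm : ‖ζ‖ = 1 := hζ.norm'_eq_one (by omega)
  set w := ζ ^ a * (ζ ^ b)⁻¹
  have hterm : ∀ k, (ζ ^ k) ^ a * conj ((ζ ^ k) ^ b) = w ^ k := fun k => by
    rw [← inv_eq_conj (by simp [hnorm])]
    ring
  simp_rw [hterm]
  split_ifs with hab
  · simp [w, hab, hζ.ne_zero (by omega)]
  · have hw : w ≠ 1 := fun h =>
      hab (hζ.pow_inj ha hb (mul_inv_eq_one₀ (pow_ne_zero _ (hζ.ne_zero (by omega))) |>.mp h))
    have hwN : w ^ N = 1 := by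
      rw [mul_pow, inv_pow, pow_right_comm, pow_right_comm ζ b, hζ.pow_eq_one, one_pow, one_pow,
        inv_one, mul_one]
    rw [geom_sum_eq hw, hwN, sub_self, zero_div]

variable {σ : Type*} [Fintype σ] [DecidableEq σ]

theorem sum_prod_pow_mul_conj_prod_pow (hζ : IsPrimitiveRoot ζ N) {ν μ : σ →₀ ℕ}
    (hν : ∀ i, ν i < N) (hμ : ∀ i, μ i < N) :
    ∑ j ∈ Fintype.piFinset fun _ : σ => range N,
        (∏ i, (ζ ^ j i) ^ ν i) * conj (∏ i, (ζ ^ j i) ^ μ i) =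
      if ν = μ then (N : ℂ) ^ Fintype.card σ else 0 := by
  simp_rw [map_prod, ← prod_mul_distrib]
  rw [← prod_univ_sum (fun _ => range N) fun i k => (ζ ^ k) ^ ν i * conj ((ζ ^ k) ^ μ i)]
  simp_rw [hζ.sum_pow_mul_conj_pow (hν _) (hμ _)]
  split_ifs with h
  · simp [h]
  · obtain ⟨i, hi⟩ : ∃ i, ν i ≠ μ i := by
      by_contra! h'
      exact h (Finsupp.ext h')
    exact prod_eq_zero (mem_univ i) (if_neg hi)

theorem sum_norm_sq_eval_pow (hζ : IsPrimitiveRoot ζ N) (p : MvPolynomial σ ℂ)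
    (hp : ∀ ν ∈ p.support, ∀ i, ν i < N) :
    ∑ j ∈ Fintype.piFinset (fun _ : σ => range N), ‖eval (fun i => ζ ^ j i) p‖ ^ 2 =
      N ^ Fintype.card σ * ∑ ν ∈ p.support, ‖p.coeff ν‖ ^ 2 := by
  apply ofReal_injective
  push_cast
  simp_rw [← mul_conj', eval_eq', map_sum, map_mul, sum_mul_sum, mul_sum]
  calc _ = ∑ ν ∈ p.support, ∑ μ ∈ p.support, p.coeff ν * conj (p.coeff μ) *
          ∑ j ∈ Fintype.piFinset fun _ : σ => range N,
            (∏ i, (ζ ^ j i) ^ ν i) * conj (∏ i, (ζ ^ j i) ^ μ i) := by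
        rw [sum_comm]
        refine sum_congr rfl fun ν _ => ?_
        rw [sum_comm]
        refine sum_congr rfl fun μ _ => ?_
        rw [mul_sum]
        exact sum_congr rfl fun j _ => by ring
    _ = _ := by
        refine sum_congr rfl fun ν hν => ?_
        rw [sum_congr rfl fun μ hμ => by
          rw [hζ.sum_prod_pow_mul_conj_prod_pow (hp ν hν) (hp μ hμ)]]
        simp only [mul_ite, mul_zero, sum_ite_eq, if_pos hν]
        ring

end IsPrimitiveRoot

namespace MvPolynomial

variable {σ : Type*}

theorem sum_norm_sq_coeff_le_of_norm_eval_le [Fintype σ] (p : MvPolynomial σ ℂ)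
    {C : ℝ} (h : ∀ x : σ → ℂ, (∀ i, ‖x i‖ = 1) → ‖eval x p‖ ≤ C) :
    ∑ ν ∈ p.support, ‖p.coeff ν‖ ^ 2 ≤ C ^ 2 := by
  classical
  obtain ⟨N, hN0, hp⟩ : ∃ N ≠ 0, ∀ ν ∈ p.support, ∀ i, ν i < N :=
    ⟨p.totalDegree + 1, by omega, fun ν hν i =>
      Nat.lt_succ_of_le ((monomial_le_degreeOf i hν).trans (degreeOf_le_totalDegree p i))⟩
  obtain ⟨ζ, hζ⟩ : ∃ ζ : ℂ, IsPrimitiveRoot ζ N := ⟨_, isPrimitiveRoot_exp N hN0⟩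
  have hgrid : ∀ j : σ → ℕ, ‖eval (fun i => ζ ^ j i) p‖ ^ 2 ≤ C ^ 2 :=
    fun j => pow_le_pow_left₀ (norm_nonneg _)
      (h _ fun i => by rw [norm_pow, hζ.norm'_eq_one hN0, one_pow]) 2
  have hN : (0 : ℝ) < N ^ Fintype.card σ := by positivity
  refine le_of_mul_le_mul_left ?_ hN
  calc (N : ℝ) ^ Fintype.card σ * ∑ ν ∈ p.support, ‖p.coeff ν‖ ^ 2
      = ∑ j ∈ Fintype.piFinset (fun _ : σ => range N),
          ‖eval (fun i => ζ ^ j i) p‖ ^ 2 := (hζ.sum_norm_sq_eval_pow p hp).symm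
    _ ≤ ∑ _j ∈ Fintype.piFinset (fun _ : σ => range N), C ^ 2 := sum_le_sum fun j _ => hgrid j
    _ = N ^ Fintype.card σ * C ^ 2 := by simp

theorem exists_eq_monomial_of_sum_sq_coeff_le_one (P : MvPolynomial σ ℤ) (hP : P ≠ 0)
    (h : ∑ ν ∈ P.support, P.coeff ν ^ 2 ≤ 1) :
    ∃ ν ∈ P.support, P = monomial ν 1 ∨ P = monomial ν (-1) := by
  obtain ⟨ν, hν⟩ := support_nonempty.mpr hP
  have hsq : ∀ μ ∈ P.support, 1 ≤ P.coeff μ ^ 2 := fun μ hμ => by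
    rw [← sq_abs]
    exact one_le_pow₀ (Int.one_le_abs (mem_support_iff.mp hμ))
  have hcard : #P.support ≤ 1 := by
    have := card_nsmul_le_sum _ _ 1 hsq
    simp only [nsmul_eq_mul, mul_one] at this
    exact_mod_cast this.trans h
  have hsupp : P.support = {ν} :=
    eq_singleton_iff_unique_mem.mpr ⟨hν, fun μ hμ => card_le_one.mp hcard μ hμ ν hν⟩
  have hunit : P.coeff ν ^ 2 = 1 := by
    rw [hsupp, sum_singleton] at h
    exact le_antisymm h (hsq ν hν)
  have hmono : P = monomial ν (P.coeff ν) := P.as_sum.trans (by rw [hsupp, sum_singleton])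
  refine ⟨ν, hν, ?_⟩
  rcases sq_eq_one_iff.mp hunit with h1 | h1 <;> rw [h1] at hmono <;> simp [hmono]

end MvPolynomial

theorem homogeneous_int_poly_bounded_is_pm_monomial_general
    {d l : ℕ}
    (P : MvPolynomial (Fin (d + 1)) ℤ) (hP : P ≠ 0)
    (hhom : P.IsHomogeneous l)
    (hbound : ∀ x : Fin (d + 1) → ℂ,
      ‖MvPolynomial.eval x (P.map (Int.castRingHom ℂ))‖ ≤
        (Finset.univ.sup' Finset.univ_nonempty fun i => ‖x i‖) ^ l) :
    ∃ ν : Fin (d + 1) →₀ ℕ, (∑ i, ν i) = l ∧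
      (P = MvPolynomial.monomial ν 1 ∨ P = MvPolynomial.monomial ν (-1)) := by
  have htorus : ∀ x : Fin (d + 1) → ℂ, (∀ i, ‖x i‖ = 1) →
      ‖eval x (P.map (Int.castRingHom ℂ))‖ ≤ 1 := fun x hx => by
    simpa [hx] using hbound x
  have hcoeff : ∑ ν ∈ P.support, P.coeff ν ^ 2 ≤ 1 := by
    have := sum_norm_sq_coeff_le_of_norm_eval_le _ htorus
    rw [support_map_of_injective _ (RingHom.injective_int _)] at this
    simp only [coeff_map, eq_intCast, norm_intCast, sq_abs] at this
    exact_mod_cast this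
  obtain ⟨ν, hν, hmono⟩ := exists_eq_monomial_of_sum_sq_coeff_le_one P hP hcoeff
  refine ⟨ν, ?_, hmono⟩
  rw [← Finsupp.degree_eq_sum, Finsupp.degree_eq_weight_one]
  exact hhom (mem_support_iff.mp hν)

/-- An integer homogeneous polynomial of degree `l` in `d+1` variables whose modulus is
bounded by `max(|x₀|,…,|x_d|)^l` on all of `ℂ^{d+1}` is `±` a monomial of degree `l`. -/
theorem homogeneous_int_poly_bounded_is_pm_monomial
    {d l : ℕ} (hd : 1 ≤ d) (hl : 1 ≤ l)
    (P : MvPolynomial (Fin (d + 1)) ℤ) (hP : P ≠ 0)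
    (hhom : P.IsHomogeneous l)
    (hbound : ∀ x : Fin (d + 1) → ℂ,
      ‖MvPolynomial.eval x (P.map (Int.castRingHom ℂ))‖ ≤
        (Finset.univ.sup' Finset.univ_nonempty fun i => ‖x i‖) ^ l) :
    ∃ ν : Fin (d + 1) →₀ ℕ, (∑ i, ν i) = l ∧
      (P = MvPolynomial.monomial ν 1 ∨ P = MvPolynomial.monomial ν (-1)) :=
  homogeneous_int_poly_bounded_is_pm_monomial_general P hP hhom hbound
end

section
/- Let P ∈ ℤ[X₁,…,X_d] be a nonzero polynomial with integer coefficients in d variables such that |P(z₁,…,z_d)| ≤ 1 for all (z₁,…,z_d) ∈ ℂ^d with |z₁| = ⋯ = |z_d| = 1. Then there exists a multi-index ν ∈ ℕ^d such that P = X^ν or P = −X^ν. -/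
/-!
Evaluate `P` on the grid of `N`-th roots of unity in `(S¹)^d`, with `N` larger than every
exponent occurring in `P`. There the monomials of `P` are orthogonal, so the mean of `|P|²` over
the grid is `∑ₐ cₐ²` (a discrete Parseval identity), and `|P| ≤ 1` gives `∑ₐ cₐ² ≤ 1`.
A nonzero integer coefficient has `cₐ² ≥ 1`, so `P` has exactly one nonzero coefficient,
and it is `±1`.
-/

open Finset ComplexConjugate

namespace IsPrimitiveRoot

variable {K : Type*} [Field K] {ζ : K} {N : ℕ}

theorem geom_sum_zpow_eq_zero (hζ : IsPrimitiveRoot ζ N) {e : ℤ} (he : ¬(N : ℤ) ∣ e) :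
    ∑ j ∈ range N, (ζ ^ e) ^ j = 0 := by
  have hne : ζ ^ e ≠ 1 := mt (hζ.zpow_eq_one_iff_dvd e).mp he
  have hpow : (ζ ^ e) ^ N = 1 := by
    rw [← zpow_natCast, ← zpow_mul, mul_comm, zpow_mul, zpow_natCast, hζ.pow_eq_one, one_zpow]
  rw [geom_sum_eq hne, hpow, sub_self, zero_div]

theorem sum_fin_zpow_pow (hζ : IsPrimitiveRoot ζ N) {e : ℤ} (he : |e| < N) :
    ∑ j : Fin N, (ζ ^ e) ^ (j : ℕ) = if e = 0 then (N : K) else 0 := by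
  rw [Fin.sum_univ_eq_sum_range (fun j => (ζ ^ e) ^ j)]
  split_ifs with h
  · simp [h]
  · exact hζ.geom_sum_zpow_eq_zero fun hdvd => h (Int.eq_zero_of_abs_lt_dvd hdvd he)

variable {σ : Type*} [Fintype σ] [DecidableEq σ]

theorem sum_pi_fin_prod_zpow_pow (hζ : IsPrimitiveRoot ζ N) {e : σ → ℤ} (he : ∀ i, |e i| < N) :
    ∑ k : σ → Fin N, ∏ i, (ζ ^ e i) ^ (k i : ℕ) =
      if e = 0 then (N : K) ^ Fintype.card σ else 0 := by
  rw [← Fintype.prod_sum (fun i (j : Fin N) => (ζ ^ e i) ^ (j : ℕ))]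
  simp only [hζ.sum_fin_zpow_pow (he _)]
  split_ifs with h
  · simp [h]
  · obtain ⟨i, hi⟩ := Function.ne_iff.mp h
    exact prod_eq_zero (mem_univ i) (if_neg hi)

theorem sum_pi_fin_prod_zpow_sub_pow (hζ : IsPrimitiveRoot ζ N) {a b : σ → ℕ}
    (ha : ∀ i, a i < N) (hb : ∀ i, b i < N) :
    ∑ k : σ → Fin N, ∏ i, (ζ ^ ((a i : ℤ) - b i)) ^ (k i : ℕ) =
      if a = b then (N : K) ^ Fintype.card σ else 0 := by
  have hlt : ∀ i, |(a i : ℤ) - b i| < N := fun i => by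
    have := ha i; have := hb i; rw [abs_lt]; omega
  rw [hζ.sum_pi_fin_prod_zpow_pow hlt]
  exact if_congr (by simp [funext_iff, sub_eq_zero]) rfl rfl

end IsPrimitiveRoot

namespace MvPolynomial

variable {σ : Type*} [Fintype σ]

theorem norm_eval_sq_eq_sum_sum_of_norm_eq_one (Q : MvPolynomial σ ℂ) {z : σ → ℂ}
    (hz : ∀ i, ‖z i‖ = 1) :
    (‖eval z Q‖ ^ 2 : ℂ) = ∑ a ∈ Q.support, ∑ b ∈ Q.support,
      Q.coeff a * conj (Q.coeff b) * ∏ i, z i ^ ((a i : ℤ) - b i) := by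
  rw [← Complex.mul_conj', eval_eq', map_sum, sum_mul_sum]
  refine sum_congr rfl fun a _ => sum_congr rfl fun b _ => ?_
  have hz0 : ∀ i, z i ≠ 0 := fun i => norm_ne_zero_iff.mp (by rw [hz i]; exact one_ne_zero)
  simp only [map_mul, map_prod, map_pow, ← Complex.inv_eq_conj (hz _), zpow_sub₀ (hz0 _),
    zpow_natCast, div_eq_mul_inv, inv_pow, prod_mul_distrib]
  ring

theorem sum_norm_eval_pow_sq_eq [DecidableEq σ] (Q : MvPolynomial σ ℂ) {ζ : ℂ} {N : ℕ}
    (hζ : IsPrimitiveRoot ζ N) (hQ : ∀ a ∈ Q.support, ∀ i, a i < N) :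
    ∑ k : σ → Fin N, ‖eval (fun i => ζ ^ (k i : ℕ)) Q‖ ^ 2 =
      N ^ Fintype.card σ * ∑ a ∈ Q.support, ‖Q.coeff a‖ ^ 2 := by
  apply Complex.ofReal_injective
  push_cast
  have hnorm : ∀ (k : σ → Fin N) i, ‖ζ ^ (k i : ℕ)‖ = 1 := fun k i => by
    rw [norm_pow, hζ.norm'_eq_one (k i).pos.ne', one_pow]
  have hpow : ∀ (k : σ → Fin N) i (m : ℤ), (ζ ^ (k i : ℕ)) ^ m = (ζ ^ m) ^ (k i : ℕ) :=
    fun k i m => by rw [← zpow_natCast, ← zpow_natCast, ← zpow_mul, ← zpow_mul, mul_comm]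
  simp only [norm_eval_sq_eq_sum_sum_of_norm_eq_one Q (hnorm _), hpow]
  rw [sum_comm, mul_sum]
  refine sum_congr rfl fun a ha => ?_
  rw [sum_comm]
  calc ∑ b ∈ Q.support, ∑ k : σ → Fin N,
        Q.coeff a * conj (Q.coeff b) * ∏ i, (ζ ^ ((a i : ℤ) - b i)) ^ (k i : ℕ)
      = ∑ b ∈ Q.support, Q.coeff a * conj (Q.coeff b) *
          if b = a then (N : ℂ) ^ Fintype.card σ else 0 :=
        sum_congr rfl fun b hb => by
          rw [← mul_sum, hζ.sum_pi_fin_prod_zpow_sub_pow (hQ a ha) (hQ b hb)]; simp [eq_comm]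
    _ = N ^ Fintype.card σ * ‖Q.coeff a‖ ^ 2 := by
        rw [sum_eq_single_of_mem a ha fun b _ hba => by rw [if_neg hba, mul_zero], if_pos rfl,
          Complex.mul_conj', mul_comm]

theorem sum_norm_coeff_sq_le_one_of_norm_eval_le_one (Q : MvPolynomial σ ℂ)
    (hQ : ∀ z : σ → ℂ, (∀ i, ‖z i‖ = 1) → ‖eval z Q‖ ≤ 1) :
    ∑ a ∈ Q.support, ‖Q.coeff a‖ ^ 2 ≤ 1 := by
  classical
  set N := Q.totalDegree + 1
  obtain ⟨ζ, hζ⟩ : ∃ ζ : ℂ, IsPrimitiveRoot ζ N :=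
    ⟨_, Complex.isPrimitiveRoot_exp N Q.totalDegree.succ_ne_zero⟩
  have hdeg : ∀ a ∈ Q.support, ∀ i, a i < N := fun a ha i =>
    Nat.lt_succ_of_le ((Finsupp.le_degree i a).trans (le_totalDegree ha))
  have hNpos : (0 : ℝ) < (N : ℝ) ^ Fintype.card σ := by positivity
  refine le_of_mul_le_mul_left ?_ hNpos
  calc (N : ℝ) ^ Fintype.card σ * ∑ a ∈ Q.support, ‖Q.coeff a‖ ^ 2
      = ∑ k : σ → Fin N, ‖eval (fun i => ζ ^ (k i : ℕ)) Q‖ ^ 2 :=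
        (sum_norm_eval_pow_sq_eq Q hζ hdeg).symm
    _ ≤ ∑ _k : σ → Fin N, 1 := sum_le_sum fun k _ => pow_le_one₀ (norm_nonneg _) <|
        hQ _ fun i => by rw [norm_pow, hζ.norm'_eq_one Q.totalDegree.succ_ne_zero, one_pow]
    _ = (N : ℝ) ^ Fintype.card σ * 1 := by simp

theorem exists_eq_monomial_one_or_neg_one_of_sum_sq_coeff_le_one {σ : Type*}
    {P : MvPolynomial σ ℤ} (hP : P ≠ 0) (h : ∑ a ∈ P.support, P.coeff a ^ 2 ≤ 1) :
    ∃ ν, P = monomial ν 1 ∨ P = monomial ν (-1) := by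
  have hcard : #P.support = 1 := by
    refine le_antisymm ?_ (card_pos.mpr (support_nonempty.mpr hP))
    have : (#P.support : ℤ) ≤ ∑ a ∈ P.support, P.coeff a ^ 2 := by
      rw [card_eq_sum_ones, Nat.cast_sum, Nat.cast_one]
      refine sum_le_sum fun a ha => ?_
      rw [one_le_sq_iff_one_le_abs]
      exact Int.one_le_abs (mem_support_iff.mp ha)
    omega
  obtain ⟨ν, hν⟩ := card_eq_one.mp hcard
  have hc : P.coeff ν ≠ 0 := mem_support_iff.mp (hν ▸ mem_singleton_self ν)
  rw [hν, sum_singleton, sq_le_one_iff_abs_le_one, abs_le] at h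
  have hP : P = monomial ν (P.coeff ν) := eq_monomial_of_support_subset_singleton (by simp [hν])
  obtain h1 | h1 : P.coeff ν = 1 ∨ P.coeff ν = -1 := by omega
  exacts [⟨ν, .inl (h1 ▸ hP)⟩, ⟨ν, .inr (h1 ▸ hP)⟩]

end MvPolynomial

/-- An integer polynomial in `d` variables whose modulus is bounded by `1` on the unit
torus `(S¹)^d` is `±` a monomial. -/
theorem int_poly_bounded_on_torus_is_pm_monomial
    {d : ℕ} (P : MvPolynomial (Fin d) ℤ) (hP : P ≠ 0)
    (hbound : ∀ z : Fin d → ℂ, (∀ i, ‖z i‖ = 1) →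
      ‖MvPolynomial.eval z (P.map (Int.castRingHom ℂ))‖ ≤ 1) :
    ∃ ν : Fin d →₀ ℕ,
      P = MvPolynomial.monomial ν 1 ∨ P = MvPolynomial.monomial ν (-1) := by
  refine MvPolynomial.exists_eq_monomial_one_or_neg_one_of_sum_sq_coeff_le_one hP ?_
  have h := MvPolynomial.sum_norm_coeff_sq_le_one_of_norm_eval_le_one _ hbound
  simp only [MvPolynomial.support_map_of_injective P (RingHom.injective_int (Int.castRingHom ℂ)),
    MvPolynomial.coeff_map, eq_intCast, Complex.norm_intCast, sq_abs] at h
  exact_mod_cast h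
end
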